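/- Let φ be a monotonic nonessential enhancement of site percolation on the triangular lattice and fix s ∈ [0,1]. Assume there is a continuous function F : (0,∞) → ℝ such that for all b,h > 0 the crossing probabilities of independent critical site percolation on the triangular lattice satisfy lim_{δ→0} φ_δ(b,h) = F(b/h) (by Smirnov's theorem this holds with F given by Cardy's formula). Then for all b,h > 0 the crossing probabilities of the enhanced process satisfy lim_{δ→0} φ̂_δ(b,h) = F(b/h); i.e., the crossing probabilities of the enhanced process converge in the scaling limit to Cardy's formula. -/

import Mathlib

/-!
Every open crossing is an enhanced crossing, so `φ̂_δ(b, h) ≥ φ_δ(b, h)`. Conversely, for small `δ`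
an enhanced vertical crossing of `R(b, h)` yields an open one of `R(b + κ, h - κ)`. Make the
enhanced crossing chordless and prolong it by vertical rays into a doubly-infinite self-repelling
path. Nonessentiality, applied at the centre of one enhancement, reroutes the path through open
sites within distance `R₀` of that centre; the new path agrees with the old one up to finitely many
sites, so it still runs from top to bottom. After finitely many such steps every site of the path at
height in `(-h/2, h/2)` is open and lies within `O(δ R₀)` of the original crossing, and a piece of
the path crosses the slightly wider and lower rectangle. Thus
`φ_δ(b, h) ≤ φ̂_δ(b, h) ≤ φ_δ(b + κ, h - κ)`, and continuity of `F` at `b / h` squeezes the limit.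
-/

open MeasureTheory Filter Set Topology
open scoped ENNReal

namespace PercEnh

/-- Sites of the lattice (vertex set `ℤ²`). -/
abbrev Site : Type := ℤ × ℤ

/-- A configuration: the set of open sites. -/
abbrev Config : Type := Set Site

/-- Square-lattice (`ℤ²`-) adjacency: `‖x − y‖₁ = 1`. -/
def adjZ2 (x y : Site) : Prop := |x.1 - y.1| + |x.2 - y.2| = 1

/-- Matching (star) adjacency: `x ≠ y` and `‖x − y‖_∞ = 1`. -/
def adjStar (x y : Site) : Prop := x ≠ y ∧ max |x.1 - y.1| |x.2 - y.2| = 1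

/-- Euclidean norm of a site. -/
noncomputable def siteNorm (x : Site) : ℝ := Real.sqrt ((x.1 : ℝ) ^ 2 + (x.2 : ℝ) ^ 2)

/-- Sites in the closed Euclidean ball of radius `r` centred at the origin. -/
def siteBall (r : ℝ) : Set Site := {x | siteNorm x ≤ r}

/-- The shifted configuration `τ_x ω = {y − x : y ∈ ω}`. -/
def shiftConfig (x : Site) (ω : Config) : Config := {y | y + x ∈ ω}

/-- An enhancement function of (finite) range `R₀`: takes values in subsets of
`𝔹₀ = ℤ² ∩ B(R₀)` and depends only on the restriction of the configuration to `𝔹₀`. -/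
def IsEnhancement (R₀ : ℝ) (φ : Config → Config) : Prop :=
  0 ≤ R₀ ∧ (∀ ω, φ ω ⊆ siteBall R₀) ∧
    ∀ ω ω' : Config, ω ∩ siteBall R₀ = ω' ∩ siteBall R₀ → φ ω = φ ω'

/-- A monotonic enhancement function. -/
def Monotonic (φ : Config → Config) : Prop := ∀ ω ω' : Config, ω ⊆ ω' → φ ω ⊆ φ ω'

/-- The translate `φ_x(ω) = x + φ₀(τ_x ω)`. -/
def enhAt (φ : Config → Config) (x : Site) (ω : Config) : Config :=
  (fun z => z + x) '' φ (shiftConfig x ω)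

/-- The enhanced configuration `ω̂(ω, α) = ω ∪ ⋃_{x : α(x)=1} φ_x(ω)`. -/
def enhanced (φ : Config → Config) (ω : Config) (α : Site → Bool) : Config :=
  ω ∪ {y | ∃ x, α x = true ∧ y ∈ enhAt φ x ω}

/-- The fully (deterministically, with `s = 1`) enhanced configuration `ω̃`. -/
def fullyEnhanced (φ : Config → Config) (ω : Config) : Config :=
  ω ∪ {y | ∃ x, y ∈ enhAt φ x ω}

/-- `ω` contains a doubly-infinite self-repelling path (w.r.t. adjacency `adj`):
a two-sided sequence of distinct sites of `ω` in which exactly the consecutive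
pairs are adjacent. -/
def HasDISRPath (adj : Site → Site → Prop) (ω : Config) : Prop :=
  ∃ γ : ℤ → Site, Function.Injective γ ∧ (∀ i, γ i ∈ ω) ∧
    ∀ i j : ℤ, adj (γ i) (γ j) ↔ (j = i + 1 ∨ i = j + 1)

/-- The enhancement is essential: some configuration without a doubly-infinite
self-repelling path acquires one upon enhancement at the origin. -/
def Essential (adj : Site → Site → Prop) (φ : Config → Config) : Prop :=
  ∃ ω : Config, ¬ HasDISRPath adj ω ∧ HasDISRPath adj (ω ∪ φ ω)

/-- A (finite, nonempty) path w.r.t. adjacency `adj`: distinct sites,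
consecutive ones adjacent. -/
def IsPathOn (adj : Site → Site → Prop) (l : List Site) : Prop :=
  l ≠ [] ∧ l.Nodup ∧ l.Chain' adj

/-- `x` and `y` are joined by a path of sites of `ω`. -/
def ConnectedIn (adj : Site → Site → Prop) (ω : Config) (x y : Site) : Prop :=
  ∃ l : List Site, IsPathOn adj l ∧ (∀ z ∈ l, z ∈ ω) ∧
    l.head? = some x ∧ l.getLast? = some y

/-- `x` belongs to an infinite open cluster of `ω`. -/
def InInfiniteCluster (adj : Site → Site → Prop) (ω : Config) (x : Site) : Prop :=
  {y | ConnectedIn adj ω x y}.Infinite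

/-- `ω` contains an infinite open cluster. -/
def HasInfiniteCluster (adj : Site → Site → Prop) (ω : Config) : Prop :=
  ∃ x, InInfiniteCluster adj ω x

/-- The configuration corresponding to `η : Site → Bool`. -/
def toConfig (η : Site → Bool) : Config := {x | η x = true}

/-- A cylinder event. -/
def cylinder (F : Finset Site) (b : Site → Bool) : Set (Site → Bool) :=
  {η | ∀ x ∈ F, η x = b x}

/-- `μ` is the Bernoulli product measure with density `p` of open sites. -/
def IsBernoulli (p : ℝ) (μ : Measure (Site → Bool)) : Prop :=
  IsProbabilityMeasure μ ∧
    ∀ (F : Finset Site) (b : Site → Bool),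
      μ (cylinder F b) = ∏ x ∈ F, ENNReal.ofReal (if b x then p else 1 - p)

/-- The percolation probability `θ`: the probability that the origin lies in an
infinite open cluster. -/
noncomputable def theta (adj : Site → Site → Prop) (μ : Measure (Site → Bool)) : ℝ :=
  (μ {η | InInfiniteCluster adj (toConfig η) 0}).toReal

/-- The percolation probability of the enhanced process (`μ` the law of the
configuration, `ν` the law of the activation variables). -/
noncomputable def thetaEnh (adj : Site → Site → Prop) (φ : Config → Config)
    (μ ν : Measure (Site → Bool)) : ℝ :=
  ((μ.prod ν) {ηα | InInfiniteCluster adj (enhanced φ (toConfig ηα.1) ηα.2) 0}).toReal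

/-- The critical point `p_c = sup {p ∈ [0,1] : θ(p) = 0}` for the family `P`. -/
noncomputable def pcOf (adj : Site → Site → Prop) (P : ℝ → Measure (Site → Bool)) : ℝ :=
  sSup {p | p ∈ Icc (0:ℝ) 1 ∧ theta adj (P p) = 0}

/-- The connectivity function `τ_p(x)`. -/
noncomputable def tau (adj : Site → Site → Prop) (μ : Measure (Site → Bool)) (x : Site) : ℝ :=
  (μ {η | ConnectedIn adj (toConfig η) 0 x}).toReal

/-- The connectivity function `τ_{p,s}(x)` of the enhanced process. -/
noncomputable def tauEnh (adj : Site → Site → Prop) (φ : Config → Config)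
    (μ ν : Measure (Site → Bool)) (x : Site) : ℝ :=
  ((μ.prod ν) {ηα | ConnectedIn adj (enhanced φ (toConfig ηα.1) ηα.2) 0 x}).toReal

/-- The mean cluster size `χ(p) = E_p‖C‖ = ∑_x τ_p(x)`. -/
noncomputable def chi (adj : Site → Site → Prop) (μ : Measure (Site → Bool)) : ℝ≥0∞ :=
  ∑' x : Site, μ {η | ConnectedIn adj (toConfig η) 0 x}

/-- The mean cluster size of the enhanced process. -/
noncomputable def chiEnh (adj : Site → Site → Prop) (φ : Config → Config)
    (μ ν : Measure (Site → Bool)) : ℝ≥0∞ :=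
  ∑' x : Site, (μ.prod ν) {ηα | ConnectedIn adj (enhanced φ (toConfig ηα.1) ηα.2) 0 x}


/-- The open rectangle `R(b,h) = (−b/2, b/2) × (−h/2, h/2)`. -/
def rectR (b h : ℝ) : Set (ℝ × ℝ) :=
  {w | -(b / 2) < w.1 ∧ w.1 < b / 2 ∧ -(h / 2) < w.2 ∧ w.2 < h / 2}

/-- The top side `[−b/2, b/2] × {h/2}`. -/
def topSide (b h : ℝ) : Set (ℝ × ℝ) := {w | |w.1| ≤ b / 2 ∧ w.2 = h / 2}

/-- The bottom side `[−b/2, b/2] × {−h/2}`. -/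
def botSide (b h : ℝ) : Set (ℝ × ℝ) := {w | |w.1| ≤ b / 2 ∧ w.2 = -(h / 2)}

/-- The line segment from `u` to `v` in `ℝ²`. -/
def seg (u v : ℝ × ℝ) : Set (ℝ × ℝ) :=
  {w | ∃ t : ℝ, 0 ≤ t ∧ t ≤ 1 ∧ w = (1 - t) • u + t • v}

/-- There is an open vertical crossing of `R(b,h)` in the configuration `ω`, with the
lattice embedded in the plane via `emb`: an open path `x₀, x₁, …, x_m, x_{m+1}` with
the (embedded) intermediate sites in `R(b,h)`, the segment from `x₀` to `x₁` touching
the top side and the segment from `x_m` to `x_{m+1}` touching the bottom side. -/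
def VertCrossing (adj : Site → Site → Prop) (emb : Site → ℝ × ℝ) (ω : Config)
    (b h : ℝ) : Prop :=
  ∃ (n : ℕ) (x : ℕ → Site), 1 ≤ n ∧
    (∀ i ≤ n, adj (x i) (x (i + 1))) ∧
    (∀ i ≤ n + 1, ∀ j ≤ n + 1, x i = x j → i = j) ∧
    (∀ i ≤ n + 1, x i ∈ ω) ∧
    (∀ i, 1 ≤ i → i ≤ n → emb (x i) ∈ rectR b h) ∧
    (seg (emb (x 0)) (emb (x 1)) ∩ topSide b h).Nonempty ∧
    (seg (emb (x n)) (emb (x (n + 1))) ∩ botSide b h).Nonempty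

/-- Crossing probability `φ_δ(b,h)` (with `emb` the mesh-`δ` embedding). -/
noncomputable def crossProb (adj : Site → Site → Prop) (emb : Site → ℝ × ℝ)
    (μ : Measure (Site → Bool)) (b h : ℝ) : ℝ :=
  (μ {η | VertCrossing adj emb (toConfig η) b h}).toReal

/-- Crossing probability `φ̂_δ(b,h)` of the enhanced process. -/
noncomputable def crossProbEnh (adj : Site → Site → Prop) (φ : Config → Config)
    (emb : Site → ℝ × ℝ) (μ ν : Measure (Site → Bool)) (b h : ℝ) : ℝ :=
  ((μ.prod ν) {ηα | VertCrossing adj emb (enhanced φ (toConfig ηα.1) ηα.2) b h}).toReal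

/-- Triangular-lattice adjacency, realized on the vertex set `ℤ²`:
`x ~ y` iff `x − y ∈ {±(1,0), ±(0,1), ±(1,1)}`. -/
def adjT (x y : Site) : Prop :=
  x - y = (1, 0) ∨ x - y = (-1, 0) ∨ x - y = (0, 1) ∨ x - y = (0, -1) ∨
    x - y = (1, 1) ∨ x - y = (-1, -1)

/-- The standard embedding of the triangular lattice in `ℝ²` at mesh `δ`:
`(i,j) ↦ δ·(i + j/2, j·√3/2)`. -/
noncomputable def embedT (δ : ℝ) (x : Site) : ℝ × ℝ :=
  (δ * ((x.1 : ℝ) + (x.2 : ℝ) / 2), δ * ((x.2 : ℝ) * Real.sqrt 3 / 2))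

lemma adjT_iff {x y : Site} : adjT x y ↔
    (x.1 - y.1 = 1 ∧ x.2 - y.2 = 0) ∨ (x.1 - y.1 = -1 ∧ x.2 - y.2 = 0) ∨
    (x.1 - y.1 = 0 ∧ x.2 - y.2 = 1) ∨ (x.1 - y.1 = 0 ∧ x.2 - y.2 = -1) ∨
    (x.1 - y.1 = 1 ∧ x.2 - y.2 = 1) ∨ (x.1 - y.1 = -1 ∧ x.2 - y.2 = -1) := by
  simp only [adjT, Prod.ext_iff, Prod.fst_sub, Prod.snd_sub]

lemma adjT_comm {x y : Site} : adjT x y ↔ adjT y x := by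
  simp only [adjT_iff]; omega

lemma adjT_irrefl (x : Site) : ¬ adjT x x := by
  simp only [adjT_iff]; omega

lemma adjT_add_right_iff (a b x : Site) : adjT (a + x) (b + x) ↔ adjT a b := by
  simp only [adjT, add_sub_add_right_eq_sub]

lemma abs_snd_sub_le_one_of_adjT {x y : Site} (h : adjT x y) : |x.2 - y.2| ≤ 1 := by
  rw [adjT_iff] at h; rw [abs_le]; omega

lemma ne_and_not_adjT_of_two_le_snd_sub {x y : Site} (h : 2 ≤ x.2 - y.2) :
    x ≠ y ∧ ¬ adjT x y := by
  refine ⟨fun hxy => by simp [hxy] at h, fun ha => ?_⟩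
  have := abs_snd_sub_le_one_of_adjT ha
  rw [abs_le] at this; omega

lemma adjT_add_vertical_iff (a : Site) (c d : ℤ) :
    adjT (a + (0, c)) (a + (0, d)) ↔ (d = c + 1 ∨ c = d + 1) := by
  simp only [adjT_iff, Prod.fst_add, Prod.snd_add]; omega

lemma embedT_add (δ : ℝ) (x y : Site) : embedT δ (x + y) = embedT δ x + embedT δ y := by
  simp only [embedT, Prod.fst_add, Prod.snd_add, Int.cast_add, Prod.mk_add_mk]
  congr 1 <;> ring

lemma embedT_snd (δ : ℝ) (x : Site) : (embedT δ x).2 = δ * (Real.sqrt 3 / 2) * x.2 := by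
  simp only [embedT]; ring

lemma abs_embedT_snd_sub_le_of_adjT {δ : ℝ} (hδ : 0 ≤ δ) {x y : Site} (h : adjT x y) :
    |(embedT δ x).2 - (embedT δ y).2| ≤ δ * (Real.sqrt 3 / 2) := by
  have hxy : |(x.2 : ℝ) - y.2| ≤ 1 := by exact_mod_cast abs_snd_sub_le_one_of_adjT h
  rw [embedT_snd, embedT_snd, ← mul_sub, abs_mul, abs_of_nonneg (by positivity)]
  exact mul_le_of_le_one_right (by positivity) hxy

lemma abs_le_of_mem_siteBall {r : ℝ} {x : Site} (hx : x ∈ siteBall r) :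
    |(x.1 : ℝ)| ≤ r ∧ |(x.2 : ℝ)| ≤ r :=
  ⟨(Real.abs_le_sqrt (by nlinarith)).trans hx, (Real.abs_le_sqrt (by nlinarith)).trans hx⟩

lemma siteBall_finite (r : ℝ) : (siteBall r).Finite := by
  refine (Set.finite_Icc ((-⌈r⌉, -⌈r⌉) : Site) (⌈r⌉, ⌈r⌉)).subset fun x hx => ?_
  obtain ⟨h1, h2⟩ := abs_le_of_mem_siteBall hx
  have c1 : |x.1| ≤ ⌈r⌉ := by exact_mod_cast h1.trans (Int.le_ceil r)
  have c2 : |x.2| ≤ ⌈r⌉ := by exact_mod_cast h2.trans (Int.le_ceil r)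
  rw [abs_le] at c1 c2
  exact ⟨⟨c1.1, c2.1⟩, c1.2, c2.2⟩

lemma abs_embedT_fst_le_of_mem_siteBall {δ r : ℝ} (hδ : 0 ≤ δ) {x : Site}
    (hx : x ∈ siteBall r) : |(embedT δ x).1| ≤ 3 / 2 * δ * r := by
  obtain ⟨h1, h2⟩ := abs_le_of_mem_siteBall hx
  have : |(x.1 : ℝ) + x.2 / 2| ≤ 3 / 2 * r := by
    have := abs_add_le (x.1 : ℝ) (x.2 / 2)
    rw [abs_div, abs_two] at this
    linarith
  rw [embedT, abs_mul, abs_of_nonneg hδ]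
  nlinarith

section SelfRepelling

variable {adj : Site → Site → Prop}

def IsSelfRepelling (adj : Site → Site → Prop) (γ : ℤ → Site) : Prop :=
  ∀ i j, adj (γ i) (γ j) ↔ (j = i + 1 ∨ i = j + 1)

def IsTopToBottom (γ : ℤ → Site) : Prop :=
  Tendsto (fun i => (γ i).2) atBot atTop ∧ Tendsto (fun i => (γ i).2) atTop atBot

lemma IsSelfRepelling.comp_neg {γ : ℤ → Site} (hγ : IsSelfRepelling adj γ) :
    IsSelfRepelling adj (fun i => γ (-i)) := fun i j => by
  rw [hγ]; omega

lemma IsSelfRepelling.add_const (hadj : ∀ a b x, adj (a + x) (b + x) ↔ adj a b)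
    {γ : ℤ → Site} (hγ : IsSelfRepelling adj γ) (x : Site) :
    IsSelfRepelling adj (fun i => γ i + x) := fun i j => by
  rw [hadj]; exact hγ i j

lemma isSelfRepelling_of_forall_lt (hsymm : ∀ a b, adj a b → adj b a) (hirr : ∀ a, ¬ adj a a)
    {γ : ℤ → Site} (h : ∀ i j, i < j → (adj (γ i) (γ j) ↔ j = i + 1)) :
    IsSelfRepelling adj γ := by
  intro i j
  rcases lt_trichotomy i j with hij | rfl | hij
  · rw [h i j hij]; omega
  · exact iff_of_false (hirr _) (by omega)
  · rw [show adj (γ i) (γ j) ↔ adj (γ j) (γ i) from ⟨hsymm _ _, hsymm _ _⟩, h j i hij]; omega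

lemma hasDISRPath_of_shiftConfig (hadj : ∀ a b x, adj (a + x) (b + x) ↔ adj a b)
    {x : Site} {ω : Config} (h : HasDISRPath adj (shiftConfig x ω)) : HasDISRPath adj ω := by
  obtain ⟨γ, hinj, hmem, hγ⟩ := h
  exact ⟨fun i => γ i + x, fun i j hij => hinj (add_right_cancel hij), hmem,
    IsSelfRepelling.add_const hadj hγ x⟩

lemma enhAt_subset_enhAt {R₀ : ℝ} {φ : Config → Config} (hφ : IsEnhancement R₀ φ)
    (hmono : Monotonic φ) {ω ω' : Config} {x : Site}
    (h : ω ∩ (· + x) '' siteBall R₀ ⊆ ω') : enhAt φ x ω ⊆ enhAt φ x ω' := by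
  refine image_mono ?_
  rw [hφ.2.2 (shiftConfig x ω) (shiftConfig x ω ∩ siteBall R₀) (by rw [inter_assoc, inter_self])]
  exact hmono _ _ fun y ⟨hy, hyB⟩ => h ⟨hy, y, hyB, rfl⟩

/-- Nonessentiality, applied around the centre `x`: the enhancement at `x` can be bypassed by
open sites near `x`. -/
lemma hasDISRPath_bypass_enhAt (hadj : ∀ a b x, adj (a + x) (b + x) ↔ adj a b) {R₀ : ℝ}
    {φ : Config → Config} (hφ : IsEnhancement R₀ φ) (hmono : Monotonic φ)
    (hness : ¬ Essential adj φ) (ω : Config) (x : Site) {γ : ℤ → Site}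
    (hinj : Function.Injective γ) (hγ : IsSelfRepelling adj γ) :
    HasDISRPath adj ((ω ∩ (· + x) '' siteBall R₀) ∪ (range γ \ enhAt φ x ω)) := by
  set Ω := (ω ∩ (· + x) '' siteBall R₀) ∪ (range γ \ enhAt φ x ω)
  have hsub : enhAt φ x ω ⊆ enhAt φ x Ω := enhAt_subset_enhAt hφ hmono subset_union_left
  have hmem : ∀ i, γ i - x ∈ shiftConfig x Ω ∪ φ (shiftConfig x Ω) := by
    intro i
    by_cases hY : γ i ∈ enhAt φ x ω
    · obtain ⟨z, hz, hzx⟩ := hsub hY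
      right
      rwa [← hzx, add_sub_cancel_right]
    · left
      show γ i - x + x ∈ Ω
      rw [sub_add_cancel]
      exact Or.inr ⟨mem_range_self i, hY⟩
  refine hasDISRPath_of_shiftConfig hadj (x := x) (not_not.1 fun hno => hness ⟨_, hno, ?_⟩)
  exact ⟨fun i => γ i + -x, fun i j hij => hinj (add_right_cancel hij),
    fun i => by simpa [← sub_eq_add_neg] using hmem i, hγ.add_const hadj (-x)⟩

end SelfRepelling

lemma exists_affine_of_injOn_of_step {f : ℤ → ℤ} {T : ℤ}
    (hstep : ∀ t ≥ T, f (t + 1) = f t + 1 ∨ f (t + 1) = f t - 1) (hinj : InjOn f (Ici T)) :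
    ∃ s, (s = 1 ∨ s = -1) ∧ ∀ t ≥ T, f t = f T + s * (t - T) := by
  obtain ⟨s, hs_def⟩ : ∃ s, s = f (T + 1) - f T := ⟨_, rfl⟩
  have hs : s = 1 ∨ s = -1 := by rcases hstep T le_rfl with h | h <;> omega
  have hlin : ∀ n : ℕ, f (T + n) = f T + s * n ∧ f (T + n + 1) = f T + s * (n + 1) := by
    intro n
    induction n with
    | zero => exact ⟨by simp, by simp [hs_def]⟩
    | succ n ih =>
      have hne : f (T + n + 1 + 1) ≠ f (T + n) := fun he => by
        have := hinj (by simp only [mem_Ici]; omega) (by simp only [mem_Ici]; omega) he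
        omega
      have := hstep (T + n + 1) (by omega)
      simp only [Nat.cast_succ, ← add_assoc]
      refine ⟨ih.2, ?_⟩
      rcases hs with rfl | rfl <;> omega
  refine ⟨s, hs, fun t ht => ?_⟩
  have := (hlin (t - T).toNat).1
  rwa [Int.toNat_of_nonneg (by omega), add_sub_cancel] at this

section TailCapture

variable {adj : Site → Site → Prop} {γ γ' : ℤ → Site}

lemma exists_eventually_eq_affine (hγ : IsSelfRepelling adj γ) (hinj' : Function.Injective γ')
    (hγ' : IsSelfRepelling adj γ') {S : Set Site} (hS : S.Finite)
    (hsub : ∀ t, γ' t ∈ S ∪ range γ) :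
    ∃ s c : ℤ, (s = 1 ∨ s = -1) ∧ ∀ᶠ t in atTop, γ' t = γ (s * t + c) := by
  obtain ⟨M, hM⟩ := (hS.preimage hinj'.injOn).bddAbove
  obtain ⟨I, hI⟩ : ∃ I : ℤ → ℤ, ∀ t ≥ M + 1, γ (I t) = γ' t :=
    ⟨fun t => Function.invFun γ (γ' t), fun t ht =>
      Function.invFun_eq ((hsub t).resolve_left fun h => by have := hM h; omega)⟩
  obtain ⟨s, hs, haff⟩ := exists_affine_of_injOn_of_step (f := I) (T := M + 1)
    (fun t ht => by
      have h := (hγ' t (t + 1)).2 (Or.inl rfl)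
      rw [← hI t ht, ← hI (t + 1) (by omega)] at h
      have := (hγ _ _).1 h
      omega)
    (fun a ha b hb hab => hinj' (by rw [← hI a ha, ← hI b hb]; exact congrArg γ hab))
  refine ⟨s, I (M + 1) - s * (M + 1), hs, (eventually_ge_atTop (M + 1)).mono fun t ht => ?_⟩
  rw [← hI t ht]
  exact congrArg γ ((haff t ht).trans (by ring))

-- The two ends of an injective `γ'` cannot both follow the same end of `γ`.
lemma false_of_eventually_eq_of_injective (hinj' : Function.Injective γ') {c c' : ℤ}
    (htop : ∀ᶠ t in atTop, γ' t = γ (t + c)) (hbot : ∀ᶠ t in atBot, γ' t = γ (-t + c')) :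
    False := by
  obtain ⟨N, hN⟩ := eventually_atTop.1 htop
  obtain ⟨N', hN'⟩ := eventually_atBot.1 hbot
  set t := max N 0 + max (-N') 0 + max (c' - c) 0 + 1
  have h := hN' (c' - c - t) (by omega)
  rw [show -(c' - c - t) + c' = t + c by ring, ← hN t (by omega)] at h
  have := hinj' h
  omega

lemma isTopToBottom_of_eventually_eq (hγ : IsTopToBottom γ) {c c' : ℤ}
    (htop : ∀ᶠ t in atTop, γ' t = γ (t + c)) (hbot : ∀ᶠ t in atBot, γ' t = γ (t + c')) :
    IsTopToBottom γ' :=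
  ⟨(hγ.1.comp (tendsto_atBot_add_const_right _ c' tendsto_id)).congr'
      (hbot.mono fun t ht => by simp [ht]),
    (hγ.2.comp (tendsto_atTop_add_const_right _ c tendsto_id)).congr'
      (htop.mono fun t ht => by simp [ht])⟩

lemma exists_isTopToBottom_of_subset (hγ : IsSelfRepelling adj γ) (hγv : IsTopToBottom γ)
    (hinj' : Function.Injective γ') (hγ' : IsSelfRepelling adj γ') {S : Set Site} (hS : S.Finite)
    (hsub : ∀ t, γ' t ∈ S ∪ range γ) :
    ∃ γ'', Function.Injective γ'' ∧ IsSelfRepelling adj γ'' ∧ IsTopToBottom γ'' ∧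
      range γ'' ⊆ range γ' := by
  obtain ⟨s, c, hs, htop⟩ := exists_eventually_eq_affine hγ hinj' hγ' hS hsub
  obtain ⟨s', c', hs', hbot'⟩ := exists_eventually_eq_affine hγ (hinj'.comp neg_injective)
    hγ'.comp_neg hS fun t => hsub (-t)
  have hbot : ∀ᶠ t in atBot, γ' t = γ (s' * -t + c') :=
    tendsto_neg_atBot_atTop.eventually hbot' |>.mono fun t ht => by simpa using ht
  rcases hs with rfl | rfl <;> rcases hs' with rfl | rfl
  · exact (false_of_eventually_eq_of_injective (γ := γ) hinj' (by simpa using htop)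
      (by simpa using hbot)).elim
  · exact ⟨γ', hinj', hγ', isTopToBottom_of_eventually_eq hγv (by simpa using htop)
      (by simpa using hbot), subset_rfl⟩
  · refine ⟨fun t => γ' (-t), hinj'.comp neg_injective, hγ'.comp_neg,
      isTopToBottom_of_eventually_eq hγv (c := c') (c' := c) (by simpa using hbot')
        (tendsto_neg_atBot_atTop.eventually htop |>.mono fun t ht => by simpa using ht), ?_⟩
    rintro _ ⟨t, rfl⟩
    exact mem_range_self _
  · exact (false_of_eventually_eq_of_injective (γ := fun i => γ (-i)) (c := -c) (c' := -c') hinj'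
      (htop.mono fun t ht => by rw [ht]; congr 1; ring)
      (hbot.mono fun t ht => by rw [ht]; congr 1; ring)).elim

end TailCapture

section Chordless

variable {adj : Site → Site → Prop} {S : Set Site} {u v : Site}

def IsPathIn (adj : Site → Site → Prop) (S : Set Site) (u v : Site) (m : ℕ) (q : ℕ → Site) :
    Prop :=
  q 0 = u ∧ q m = v ∧ (∀ i < m, adj (q i) (q (i + 1))) ∧ InjOn q (Iic m) ∧ ∀ i ≤ m, q i ∈ S

lemma IsPathIn.shortcut {m : ℕ} {q : ℕ → Site} (hq : IsPathIn adj S u v m q) {i j : ℕ}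
    (hij : i + 2 ≤ j) (hjm : j ≤ m) (hch : adj (q i) (q j)) :
    IsPathIn adj S u v (m - (j - i - 1)) (fun k => if k ≤ i then q k else q (k + (j - i - 1))) := by
  obtain ⟨h0, hm, hadj, hinj, hS⟩ := hq
  refine ⟨by simpa using h0, ?_, fun k hk => ?_, fun k₁ hk₁ k₂ hk₂ he => ?_, fun k hk => ?_⟩
  · dsimp only
    rw [if_neg (by omega), show m - (j - i - 1) + (j - i - 1) = m by omega, hm]
  · dsimp only
    by_cases h1 : k + 1 ≤ i
    · rw [if_pos (by omega), if_pos h1]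
      exact hadj k (by omega)
    by_cases h2 : k = i
    · subst h2
      rw [if_pos le_rfl, if_neg h1, show k + 1 + (j - k - 1) = j by omega]
      exact hch
    · rw [if_neg (by omega), if_neg h1, show k + 1 + (j - i - 1) = k + (j - i - 1) + 1 by omega]
      exact hadj _ (by omega)
  · simp only [mem_Iic] at hk₁ hk₂ he
    split_ifs at he <;>
      have := hinj (by simp only [mem_Iic]; omega) (by simp only [mem_Iic]; omega) he <;> omega
  · dsimp only
    split_ifs <;> exact hS _ (by omega)

lemma IsPathIn.exists_chordless {m : ℕ} {q : ℕ → Site} (hq : IsPathIn adj S u v m q) :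
    ∃ m' q', IsPathIn adj S u v m' q' ∧ ∀ i j, i + 2 ≤ j → j ≤ m' → ¬ adj (q' i) (q' j) := by
  induction m using Nat.strong_induction_on generalizing q with
  | _ m ih =>
    by_cases hc : ∀ i j, i + 2 ≤ j → j ≤ m → ¬ adj (q i) (q j)
    · exact ⟨m, q, hq, hc⟩
    push Not at hc
    obtain ⟨i, j, hij, hjm, hch⟩ := hc
    exact ih _ (by omega) (hq.shortcut hij hjm hch)

end Chordless

section ExtendVertically

def extendVertically (q : ℕ → Site) (m : ℕ) (i : ℤ) : Site :=
  if i < 0 then q 0 + (0, -i) else if i ≤ m then q i.toNat else q m + (0, m - i)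

variable {q : ℕ → Site} {m : ℕ}

lemma extendVertically_of_nonpos {i : ℤ} (hi : i ≤ 0) :
    extendVertically q m i = q 0 + (0, -i) := by
  unfold extendVertically
  split_ifs with h h'
  · rfl
  · obtain rfl : i = 0 := by omega
    simp
  · omega

lemma extendVertically_of_le {i : ℤ} (h0 : 0 ≤ i) (hm : i ≤ m) :
    extendVertically q m i = q i.toNat := by
  simp [extendVertically, not_lt.2 h0, hm]

lemma extendVertically_of_ge {i : ℤ} (hm : (m : ℤ) ≤ i) :
    extendVertically q m i = q m + (0, m - i) := by
  unfold extendVertically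
  split_ifs with h1 h2
  · omega
  · obtain rfl : i = m := by omega
    simp
  · rfl

lemma exists_eq_extendVertically_of_snd_mem {i : ℤ} (h₁ : (q m).2 < (extendVertically q m i).2)
    (h₂ : (extendVertically q m i).2 < (q 0).2) :
    ∃ t, 0 < t ∧ t < m ∧ extendVertically q m i = q t := by
  have hi0 : 0 < i := by
    by_contra! hi
    rw [extendVertically_of_nonpos hi, Prod.snd_add] at h₂
    dsimp only at h₂
    omega
  have him : i < m := by
    by_contra! hi
    rw [extendVertically_of_ge hi, Prod.snd_add] at h₁
    dsimp only at h₁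
    omega
  exact ⟨i.toNat, by omega, by omega, extendVertically_of_le hi0.le him.le⟩

lemma isTopToBottom_extendVertically : IsTopToBottom (extendVertically q m) := by
  refine ⟨(tendsto_atTop_add_const_left _ (q 0).2 tendsto_neg_atBot_atTop).congr' ?_,
    (tendsto_atBot_add_const_left _ (q m).2
      (tendsto_atBot_add_const_left _ (m : ℤ) tendsto_neg_atTop_atBot)).congr' ?_⟩
  · filter_upwards [eventually_le_atBot 0] with i hi
    simp [extendVertically_of_nonpos hi]
  · filter_upwards [eventually_ge_atTop (m : ℤ)] with i hi
    simp [extendVertically_of_ge hi, sub_eq_add_neg]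

variable (hadj : ∀ i < m, adjT (q i) (q (i + 1))) (hinj : InjOn q (Iic m))
  (hch : ∀ i j, i + 2 ≤ j → j ≤ m → ¬ adjT (q i) (q j)) (hbelow : (q m).2 < (q 0).2)
  (hint : ∀ t, 0 < t → t < m → (q m).2 < (q t).2 ∧ (q t).2 < (q 0).2)
include hbelow hint

lemma snd_extendVertically_lt {i : ℤ} (hi : 0 < i) : (extendVertically q m i).2 < (q 0).2 := by
  rcases le_or_gt i m with him | him
  · rw [extendVertically_of_le hi.le him]
    rcases eq_or_lt_of_le him with rfl | him
    · simpa using hbelow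
    · exact (hint _ (by omega) (by omega)).2
  · rw [extendVertically_of_ge him.le, Prod.snd_add]
    dsimp only
    omega

lemma snd_extendVertically_gt {i : ℤ} (hi : i < m) : (q m).2 < (extendVertically q m i).2 := by
  rcases lt_or_ge i 0 with h0 | h0
  · rw [extendVertically_of_nonpos h0.le, Prod.snd_add]
    dsimp only
    omega
  · rw [extendVertically_of_le h0 hi.le]
    rcases eq_or_lt_of_le h0 with rfl | h0
    · simpa using hbelow
    · exact (hint _ (by omega) (by omega)).1

include hadj hinj hch

lemma extendVertically_pairwise {i j : ℤ} (hij : i < j) :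
    extendVertically q m i ≠ extendVertically q m j ∧
      (adjT (extendVertically q m i) (extendVertically q m j) ↔ j = i + 1) := by
  have far : ∀ {i j : ℤ}, i + 1 < j → 2 ≤ (extendVertically q m i).2 - (extendVertically q m j).2 →
      extendVertically q m i ≠ extendVertically q m j ∧
        (adjT (extendVertically q m i) (extendVertically q m j) ↔ j = i + 1) :=
    fun hij h => ⟨(ne_and_not_adjT_of_two_le_snd_sub h).1,
      iff_of_false (ne_and_not_adjT_of_two_le_snd_sub h).2 (by omega)⟩
  by_cases hj0 : j ≤ 0
  · rw [extendVertically_of_nonpos hj0, extendVertically_of_nonpos (hij.le.trans hj0),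
      adjT_add_vertical_iff]
    exact ⟨fun h => by simp only [add_right_inj, Prod.mk.injEq, true_and] at h; omega, by omega⟩
  by_cases hi0 : (m : ℤ) ≤ i
  · rw [extendVertically_of_ge hi0, extendVertically_of_ge (hi0.trans hij.le),
      adjT_add_vertical_iff]
    exact ⟨fun h => by simp only [add_right_inj, Prod.mk.injEq, true_and] at h; omega, by omega⟩
  by_cases hmid : 0 ≤ i ∧ j ≤ m
  · rw [extendVertically_of_le hmid.1 (by omega), extendVertically_of_le (by omega) hmid.2]
    refine ⟨fun h => by
      have := hinj (by simp only [mem_Iic]; omega) (by simp only [mem_Iic]; omega) h; omega, ?_⟩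
    by_cases hj : j = i + 1
    · rw [hj, show (i + 1).toNat = i.toNat + 1 by omega]
      exact iff_of_true (hadj _ (by omega)) rfl
    · exact iff_of_false (hch _ _ (by omega) (by omega)) hj
  rcases lt_or_ge i 0 with hi | hi
  · refine far (by omega) ?_
    rw [extendVertically_of_nonpos hi.le, Prod.snd_add]
    have := snd_extendVertically_lt hbelow hint (i := j) (by omega)
    dsimp only
    omega
  · refine far (by omega) ?_
    rw [extendVertically_of_ge (m := m) (i := j) (by omega), Prod.snd_add]
    have := snd_extendVertically_gt hbelow hint (i := i) (by omega)
    dsimp only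
    omega

lemma injective_extendVertically : Function.Injective (extendVertically q m) :=
  Function.Injective.of_lt_imp_ne fun _ _ hij =>
    (extendVertically_pairwise hadj hinj hch hbelow hint hij).1

lemma isSelfRepelling_extendVertically : IsSelfRepelling adjT (extendVertically q m) :=
  isSelfRepelling_of_forall_lt (adj := adjT) (fun _ _ h => adjT_comm.1 h) adjT_irrefl fun _ _ hij =>
    (extendVertically_pairwise hadj hinj hch hbelow hint hij).2

end ExtendVertically

lemma seg_eq_segment (u v : ℝ × ℝ) : seg u v = segment ℝ u v := by
  ext w
  simp only [seg, segment_eq_image, mem_image, mem_Icc]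
  constructor
  · rintro ⟨t, ht0, ht1, rfl⟩
    exact ⟨t, ⟨ht0, ht1⟩, rfl⟩
  · rintro ⟨t, ⟨ht0, ht1⟩, rfl⟩
    exact ⟨t, ht0, ht1, rfl⟩

lemma map_mem_uIcc_of_mem_seg (f : ℝ × ℝ →ₗ[ℝ] ℝ) {u v w : ℝ × ℝ} (hw : w ∈ seg u v) :
    f w ∈ uIcc (f u) (f v) := by
  rw [← segment_eq_uIcc, ← f.coe_toAffineMap, ← image_segment, ← seg_eq_segment]
  exact mem_image_of_mem _ hw

lemma exists_mem_seg_snd_eq {u v : ℝ × ℝ} {y B : ℝ} (hy : y ∈ uIcc u.2 v.2) (hu : |u.1| ≤ B)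
    (hv : |v.1| ≤ B) : ∃ w ∈ seg u v, |w.1| ≤ B ∧ w.2 = y := by
  rw [← segment_eq_uIcc, ← show (LinearMap.snd ℝ ℝ ℝ).toAffineMap u = u.2 from rfl,
    ← show (LinearMap.snd ℝ ℝ ℝ).toAffineMap v = v.2 from rfl, ← image_segment,
    ← seg_eq_segment] at hy
  obtain ⟨w, hw, rfl⟩ := hy
  refine ⟨w, hw, ?_, rfl⟩
  have := map_mem_uIcc_of_mem_seg (LinearMap.fst ℝ ℝ ℝ) hw
  simp only [LinearMap.fst_apply, mem_uIcc] at this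
  rw [abs_le] at hu hv ⊢
  constructor <;> rcases this with h | h <;> linarith [h.1, h.2]

lemma le_snd_of_seg_inter_topSide {u v : ℝ × ℝ} {b h : ℝ}
    (huv : (seg u v ∩ topSide b h).Nonempty) (hv : v.2 < h / 2) : h / 2 ≤ u.2 := by
  obtain ⟨w, hw, -, hw2⟩ := huv
  have := map_mem_uIcc_of_mem_seg (LinearMap.snd ℝ ℝ ℝ) hw
  simp only [LinearMap.snd_apply, hw2, mem_uIcc] at this
  rcases this with h | h <;> linarith [h.1, h.2]

lemma snd_le_of_seg_inter_botSide {u v : ℝ × ℝ} {b h : ℝ}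
    (huv : (seg u v ∩ botSide b h).Nonempty) (hu : -(h / 2) < u.2) : v.2 ≤ -(h / 2) := by
  obtain ⟨w, hw, -, hw2⟩ := huv
  have := map_mem_uIcc_of_mem_seg (LinearMap.snd ℝ ℝ ℝ) hw
  simp only [LinearMap.snd_apply, hw2, mem_uIcc] at this
  rcases this with h | h <;> linarith [h.1, h.2]

lemma VertCrossing.exists_chordless {adj : Site → Site → Prop} {emb : Site → ℝ × ℝ}
    {ω : Config} {b h : ℝ} (hcr : VertCrossing adj emb ω b h) :
    ∃ (m : ℕ) (q : ℕ → Site), h / 2 ≤ (emb (q 0)).2 ∧ (emb (q m)).2 ≤ -(h / 2) ∧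
      (∀ i < m, adj (q i) (q (i + 1))) ∧ InjOn q (Iic m) ∧
      (∀ i j, i + 2 ≤ j → j ≤ m → ¬ adj (q i) (q j)) ∧
      ∀ t, 0 < t → t < m → q t ∈ ω ∧ emb (q t) ∈ rectR b h := by
  obtain ⟨n, x, hn, hadj, hinj, hmem, hrect, htop, hbot⟩ := hcr
  have hpath : IsPathIn adj ({z | z ∈ ω ∧ emb z ∈ rectR b h} ∪ {x 0, x (n + 1)})
      (x 0) (x (n + 1)) (n + 1) x := by
    refine ⟨rfl, rfl, fun i hi => hadj i (by omega), fun i hi j hj => hinj i hi j hj,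
      fun i hi => ?_⟩
    rcases Nat.eq_zero_or_pos i with rfl | hi0
    · simp
    rcases eq_or_lt_of_le hi with rfl | hi1
    · simp
    exact Or.inl ⟨hmem i hi, hrect i hi0 (by omega)⟩
  obtain ⟨m, q, ⟨hq0, hqm, hqadj, hqinj, hqS⟩, hch⟩ := hpath.exists_chordless
  refine ⟨m, q, hq0 ▸ le_snd_of_seg_inter_topSide htop (hrect 1 le_rfl hn).2.2.2,
    hqm ▸ snd_le_of_seg_inter_botSide hbot (hrect n hn le_rfl).2.2.1, hqadj, hqinj, hch,
    fun t ht0 htm => ?_⟩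
  rcases hqS t htm.le with h | h
  · exact h
  · have hne : ∀ s ≤ m, s ≠ t → q t ≠ q s := fun s hs hst he =>
      hst (hqinj (mem_Iic.2 hs) (mem_Iic.2 htm.le) he.symm)
    rcases h with h | h
    · exact (hne 0 (Nat.zero_le _) ht0.ne (h.trans hq0.symm)).elim
    · exact (hne m le_rfl htm.ne' (h.trans hqm.symm)).elim

lemma exists_crossing_window {E : ℤ → ℝ} (htop : Tendsto E atBot atTop)
    (hbot : Tendsto E atTop atBot) {a : ℝ} :
    ∃ k l, k < l ∧ a ≤ E k ∧ E l ≤ -a ∧ ∀ i, k < i → i < l → -a < E i ∧ E i < a := by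
  obtain ⟨N, hN⟩ := eventually_atTop.1 (hbot.eventually (eventually_lt_atBot a))
  obtain ⟨k, hk, hkmax⟩ := Int.exists_greatest_of_bdd (P := fun z => a ≤ E z)
    ⟨N, fun z hz => not_lt.1 fun hzN => (hN z hzN.le).not_ge hz⟩
    (htop.eventually (eventually_ge_atTop a)).exists
  obtain ⟨l, ⟨hkl, hl⟩, hlmin⟩ := Int.exists_least_of_bdd (P := fun z => k < z ∧ E z ≤ -a)
    ⟨k, fun z hz => hz.1.le⟩
    ((eventually_gt_atTop k).and (hbot.eventually (eventually_le_atBot (-a)))).exists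
  refine ⟨k, l, hkl, hk, hl, fun i hki hil => ⟨?_, ?_⟩⟩
  · by_contra! h
    exact (hlmin i ⟨hki, h⟩).not_gt hil
  · by_contra! h
    exact (hkmax i h).not_gt hki

lemma abs_lt_of_mem_crossing_window {E : ℤ → ℝ} {a c H : ℝ} (hstep : ∀ i, |E i - E (i + 1)| ≤ c)
    (hH : a + c ≤ H) (ha : 0 < a) {k l : ℤ} (hk : a ≤ E k) (hl : E l ≤ -a)
    (hmid : ∀ i, k < i → i < l → -a < E i ∧ E i < a) (hkl : k + 1 < l) {i : ℤ} (hki : k ≤ i)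
    (hil : i ≤ l) : |E i| < H := by
  have hc : 0 ≤ c := (abs_nonneg _).trans (hstep 0)
  rw [abs_lt]
  obtain rfl | hki := eq_or_lt_of_le hki
  · constructor <;> linarith [hmid (k + 1) (by omega) (by omega), abs_le.1 (hstep k)]
  obtain rfl | hil := eq_or_lt_of_le hil
  · have := abs_le.1 (hstep (i - 1))
    rw [sub_add_cancel] at this
    constructor <;> linarith [hmid (i - 1) (by omega) (by omega)]
  · constructor <;> linarith [hmid i hki hil]

lemma snd_lt_snd_of_embedT_snd_lt {δ : ℝ} (hδ : 0 < δ) {x y : Site}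
    (h : (embedT δ x).2 < (embedT δ y).2) : x.2 < y.2 := by
  rw [embedT_snd, embedT_snd] at h
  exact_mod_cast lt_of_mul_lt_mul_left h (by positivity)

lemma IsTopToBottom.tendsto_embedT_snd {γ : ℤ → Site} (hγ : IsTopToBottom γ) {δ : ℝ}
    (hδ : 0 < δ) :
    Tendsto (fun i => (embedT δ (γ i)).2) atBot atTop ∧
      Tendsto (fun i => (embedT δ (γ i)).2) atTop atBot := by
  simp only [embedT_snd]
  exact ⟨(tendsto_intCast_atTop_iff.2 hγ.1).const_mul_atTop (by positivity),
    (tendsto_intCast_atBot_iff.2 hγ.2).const_mul_atBot (by positivity)⟩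

lemma abs_embedT_fst_add_le {δ R₀ : ℝ} (hδ : 0 ≤ δ) {a b : Site} (ha : a ∈ siteBall R₀)
    (hb : b ∈ siteBall R₀) (x : Site) :
    |(embedT δ (a + x)).1| ≤ |(embedT δ (b + x)).1| + 3 * δ * R₀ := by
  simp only [embedT_add, Prod.fst_add]
  have ha' := abs_embedT_fst_le_of_mem_siteBall hδ ha
  have hb' := abs_embedT_fst_le_of_mem_siteBall hδ hb
  calc |(embedT δ a).1 + (embedT δ x).1|
      = |((embedT δ b).1 + (embedT δ x).1) + ((embedT δ a).1 - (embedT δ b).1)| := by ring_nf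
    _ ≤ |(embedT δ b).1 + (embedT δ x).1| + (|(embedT δ a).1| + |(embedT δ b).1|) :=
      (abs_add_le _ _).trans (add_le_add_right (abs_sub _ _) _)
    _ ≤ |(embedT δ b).1 + (embedT δ x).1| + 3 * δ * R₀ := by linarith

section GoodPath

variable {δ H B : ℝ} {ω : Config} {F : Finset Site} {γ : ℤ → Site}

/-- `F` holds the enhanced sites of the band `|y| < H` that are still to be bypassed. -/
def IsGoodPath (δ H B : ℝ) (ω : Config) (F : Finset Site) (γ : ℤ → Site) : Prop :=
  Function.Injective γ ∧ IsSelfRepelling adjT γ ∧ IsTopToBottom γ ∧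
    ∀ i, |(embedT δ (γ i)).2| < H → (γ i ∈ ω ∨ γ i ∈ F) ∧ |(embedT δ (γ i)).1| ≤ B

lemma IsGoodPath.mono {F' : Finset Site} {B' : ℝ} (hγ : IsGoodPath δ H B ω F γ) (hF : F ⊆ F')
    (hB : B ≤ B') : IsGoodPath δ H B' ω F' γ :=
  ⟨hγ.1, hγ.2.1, hγ.2.2.1, fun i hi =>
    ⟨(hγ.2.2.2 i hi).1.imp_right (@hF _), (hγ.2.2.2 i hi).2.trans hB⟩⟩

variable {R₀ : ℝ} {φ : Config → Config}

lemma IsGoodPath.exists_erase (hφ : IsEnhancement R₀ φ) (hmono : Monotonic φ)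
    (hness : ¬ Essential adjT φ) (hδ : 0 ≤ δ) (hγ : IsGoodPath δ H B ω F γ) {z x : Site}
    (hzx : z ∈ enhAt φ x ω) (hzB : |(embedT δ z).1| + 3 * δ * R₀ ≤ B) :
    ∃ γ', IsGoodPath δ H B ω (F.erase z) γ' := by
  obtain ⟨hinj, hsr, hv, hband⟩ := hγ
  obtain ⟨γ₁, hinj₁, hmem₁, hsr₁⟩ :=
    hasDISRPath_bypass_enhAt adjT_add_right_iff hφ hmono hness ω x hinj hsr
  have hball : ∀ w ∈ ω ∩ (· + x) '' siteBall R₀, |(embedT δ w).1| ≤ B := by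
    rintro _ ⟨-, a, ha, rfl⟩
    obtain ⟨b, hb, rfl⟩ := hzx
    linarith [abs_embedT_fst_add_le hδ ha (hφ.2.1 _ hb) x]
  obtain ⟨γ₂, hinj₂, hsr₂, hv₂, hrange⟩ := exists_isTopToBottom_of_subset hsr hv hinj₁ hsr₁
    (((siteBall_finite R₀).image _).subset inter_subset_right)
    fun t => (hmem₁ t).imp_right fun h => h.1
  refine ⟨γ₂, hinj₂, hsr₂, hv₂, fun i hi => ?_⟩
  obtain ⟨t, ht⟩ := hrange (mem_range_self i)
  rcases ht ▸ hmem₁ t with hw | ⟨⟨s, hs⟩, hY⟩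
  · exact ⟨Or.inl hw.1, hball _ hw⟩
  · rw [← hs] at hi hY ⊢
    refine ⟨(hband s hi).1.imp_right fun hF => Finset.mem_erase.2 ⟨?_, hF⟩, (hband s hi).2⟩
    rintro rfl
    exact hY hzx

lemma IsGoodPath.exists_empty (hφ : IsEnhancement R₀ φ) (hmono : Monotonic φ)
    (hness : ¬ Essential adjT φ) (hδ : 0 ≤ δ)
    (hF : ∀ z ∈ F, (∃ x, z ∈ enhAt φ x ω) ∧ |(embedT δ z).1| + 3 * δ * R₀ ≤ B)
    (hγ : IsGoodPath δ H B ω F γ) : ∃ γ', IsGoodPath δ H B ω ∅ γ' := by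
  induction F using Finset.induction_on generalizing γ with
  | empty => exact ⟨γ, hγ⟩
  | insert z F _ ih =>
    obtain ⟨⟨x, hzx⟩, hzB⟩ := hF z (Finset.mem_insert_self z F)
    obtain ⟨γ', hγ'⟩ := hγ.exists_erase hφ hmono hness hδ hzx hzB
    exact ih (fun w hw => hF w (Finset.mem_insert_of_mem hw))
      (hγ'.mono (Finset.erase_insert_subset z F) le_rfl)

end GoodPath

lemma exists_isGoodPath_of_vertCrossing {φ : Config → Config} {ω : Config} {α : Site → Bool}
    {δ b h : ℝ} (hδ : 0 < δ) (hh : 0 < h)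
    (hcr : VertCrossing adjT (embedT δ) (enhanced φ ω α) b h) :
    ∃ (F : Finset Site) (γ : ℤ → Site),
      (∀ z ∈ F, (∃ x, z ∈ enhAt φ x ω) ∧ |(embedT δ z).1| ≤ b / 2) ∧
        IsGoodPath δ (h / 2) (b / 2) ω F γ := by
  classical
  obtain ⟨m, q, htop, hbot, hadj, hinj, hch, hint⟩ := hcr.exists_chordless
  have hlt {z w : Site} : (embedT δ z).2 < (embedT δ w).2 → z.2 < w.2 :=
    snd_lt_snd_of_embedT_snd_lt hδ
  have hbelow : (q m).2 < (q 0).2 := hlt (by linarith)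
  have hint' : ∀ t, 0 < t → t < m → (q m).2 < (q t).2 ∧ (q t).2 < (q 0).2 := fun t h0 hm => by
    have := (hint t h0 hm).2
    exact ⟨hlt (by linarith [this.2.2.1]), hlt (by linarith [this.2.2.2])⟩
  set F := ((Finset.Ioo 0 m).image q).filter (· ∉ ω)
  have hqF : ∀ t, 0 < t → t < m → (q t ∈ ω ∨ q t ∈ F) ∧ |(embedT δ (q t)).1| ≤ b / 2 :=
    fun t h0 hm => ⟨(em _).imp_right fun h => Finset.mem_filter.2
        ⟨Finset.mem_image_of_mem _ (Finset.mem_Ioo.2 ⟨h0, hm⟩), h⟩,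
      abs_le.2 ⟨(hint t h0 hm).2.1.le, (hint t h0 hm).2.2.1.le⟩⟩
  refine ⟨F, extendVertically q m, fun z hz => ?_, injective_extendVertically hadj hinj hch
    hbelow hint', isSelfRepelling_extendVertically hadj hinj hch hbelow hint',
    isTopToBottom_extendVertically, fun i hi => ?_⟩
  · obtain ⟨hz, hzω⟩ := Finset.mem_filter.1 hz
    obtain ⟨t, ht, rfl⟩ := Finset.mem_image.1 hz
    obtain ⟨h0, hm⟩ := Finset.mem_Ioo.1 ht
    obtain ⟨x, -, hx⟩ := (hint t h0 hm).1.resolve_left hzω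
    exact ⟨⟨x, hx⟩, (hqF t h0 hm).2⟩
  · rw [abs_lt] at hi
    obtain ⟨t, h0, hm, he⟩ :=
      exists_eq_extendVertically_of_snd_mem (hlt (by linarith)) (hlt (by linarith))
    rw [he]
    exact hqF t h0 hm

lemma vertCrossing_of_isGoodPath {δ H B b h : ℝ} {ω : Config} {γ : ℤ → Site} (hδ : 0 < δ)
    (hγ : IsGoodPath δ H B ω ∅ γ) (hB : B < b / 2) (hh : Real.sqrt 3 * δ < h)
    (hH : h / 2 + δ * (Real.sqrt 3 / 2) ≤ H) :
    VertCrossing adjT (embedT δ) ω b h := by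
  obtain ⟨hinj, hsr, hv, hband⟩ := hγ
  have hc : 0 ≤ Real.sqrt 3 * δ := by positivity
  have hstep (i : ℤ) := abs_le.1 <|
    abs_embedT_snd_sub_le_of_adjT hδ.le ((hsr i (i + 1)).2 (Or.inl rfl))
  obtain ⟨k, l, hkl, hk, hl, hmid⟩ :=
    exists_crossing_window (hv.tendsto_embedT_snd hδ).1 (hv.tendsto_embedT_snd hδ).2 (a := h / 2)
  have hk1 : k + 1 < l := by
    by_contra! h'
    obtain rfl : l = k + 1 := by omega
    linarith [hstep k]
  have hopen (i : ℤ) (hki : k ≤ i) (hil : i ≤ l) : γ i ∈ ω ∧ |(embedT δ (γ i)).1| ≤ B := by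
    have hEi := abs_lt_of_mem_crossing_window (fun i => abs_le.2 (hstep i)) hH
      (by linarith) hk hl hmid hk1 hki hil
    exact ⟨(hband i hEi).1.resolve_right (Finset.notMem_empty _), (hband i hEi).2⟩
  have hseg {i : ℤ} (hki : k ≤ i) (hil : i < l) {y : ℝ}
      (hy : y ∈ uIcc (embedT δ (γ i)).2 (embedT δ (γ (i + 1))).2) :
      ∃ w ∈ seg (embedT δ (γ i)) (embedT δ (γ (i + 1))), |w.1| ≤ b / 2 ∧ w.2 = y :=
    exists_mem_seg_snd_eq hy ((hopen i hki hil.le).2.trans hB.le)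
      ((hopen (i + 1) (by omega) (by omega)).2.trans hB.le)
  obtain ⟨n, hn⟩ : ∃ n : ℕ, (n : ℤ) = l - k - 1 := ⟨(l - k - 1).toNat, by omega⟩
  refine ⟨n, fun i => γ (k + i), by omega, fun i _ => (hsr _ _).2 (Or.inl (by push_cast; ring)),
    fun i _ j _ he => by have := hinj he; omega, fun i hi => (hopen _ (by omega) (by omega)).1,
    fun i h1 h2 => ?_, ?_, ?_⟩
  · have := hmid (k + i) (by omega) (by omega)
    have := abs_le.1 (hopen (k + i) (by omega) (by omega)).2
    exact ⟨by linarith, by linarith, by linarith, by linarith⟩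
  · dsimp only
    rw [Nat.cast_zero, add_zero, Nat.cast_one]
    obtain ⟨w, hw, hw'⟩ := hseg le_rfl (by omega)
      (mem_uIcc.2 (Or.inr ⟨(hmid (k + 1) (by omega) (by omega)).2.le, hk⟩))
    exact ⟨w, hw, hw'⟩
  · dsimp only
    rw [show k + (n : ℤ) = l - 1 by omega,
      show k + ((n + 1 : ℕ) : ℤ) = l - 1 + 1 by push_cast; omega]
    obtain ⟨w, hw, hw'⟩ := hseg (by omega) (by omega) (mem_uIcc.2 (Or.inr
      ⟨by rwa [sub_add_cancel], (hmid (l - 1) (by omega) (by omega)).1.le⟩))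
    exact ⟨w, hw, hw'⟩

lemma vertCrossing_of_vertCrossing_enhanced {R₀ : ℝ} {φ : Config → Config}
    (hφ : IsEnhancement R₀ φ) (hmono : Monotonic φ) (hness : ¬ Essential adjT φ)
    {ω : Config} {α : Site → Bool} {δ b h b' h' : ℝ} (hδ : 0 < δ)
    (hb : b / 2 + 3 * δ * R₀ < b' / 2) (hh' : Real.sqrt 3 * δ < h')
    (hh : h' / 2 + δ * (Real.sqrt 3 / 2) ≤ h / 2)
    (hcr : VertCrossing adjT (embedT δ) (enhanced φ ω α) b h) :
    VertCrossing adjT (embedT δ) ω b' h' := by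
  have hR₀ : 0 ≤ 3 * δ * R₀ := by have := hφ.1; positivity
  obtain ⟨F, γ, hF, hγ⟩ :=
    exists_isGoodPath_of_vertCrossing hδ (by nlinarith [Real.sqrt_nonneg 3]) hcr
  obtain ⟨γ', hγ'⟩ := (hγ.mono subset_rfl (le_add_of_nonneg_right hR₀)).exists_empty hφ hmono
    hness hδ.le fun z hz => ⟨(hF z hz).1, by linarith [(hF z hz).2]⟩
  exact vertCrossing_of_isGoodPath hδ hγ' hb hh' hh

lemma eventually_vertCrossing_of_vertCrossing_enhanced {R₀ : ℝ} {φ : Config → Config}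
    (hφ : IsEnhancement R₀ φ) (hmono : Monotonic φ) (hness : ¬ Essential adjT φ)
    {b h κ : ℝ} (hκ : κ ∈ Ioo 0 h) :
    ∀ᶠ δ in 𝓝[>] 0, ∀ ω α, VertCrossing adjT (embedT δ) (enhanced φ ω α) b h →
      VertCrossing adjT (embedT δ) ω (b + κ) (h - κ) := by
  have hsmall (C : ℝ) {a : ℝ} (ha : 0 < a) : ∀ᶠ δ in 𝓝[>] (0 : ℝ), C * δ < a :=
    nhdsWithin_le_nhds <|
      ((continuous_const_mul C).tendsto' 0 0 (mul_zero C)).eventually (gt_mem_nhds ha)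
  filter_upwards [self_mem_nhdsWithin, hsmall (6 * R₀) hκ.1,
    hsmall (Real.sqrt 3) (lt_min hκ.1 (sub_pos.2 hκ.2))] with δ hδ h₁ h₂ ω α
  have := lt_min_iff.1 h₂
  exact vertCrossing_of_vertCrossing_enhanced hφ hmono hness hδ (by linarith) (by linarith)
    (by linarith)

lemma VertCrossing.mono {adj : Site → Site → Prop} {emb : Site → ℝ × ℝ} {ω ω' : Config}
    {b h : ℝ} (hcr : VertCrossing adj emb ω b h) (hωω' : ω ⊆ ω') :
    VertCrossing adj emb ω' b h := by
  obtain ⟨n, x, h1, h2, h3, h4, h5⟩ := hcr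
  exact ⟨n, x, h1, h2, h3, fun i hi => hωω' (h4 i hi), h5⟩

section CrossProb

variable {adj : Site → Site → Prop} {emb : Site → ℝ × ℝ} {φ : Config → Config}
  {μ ν : Measure (Site → Bool)} [IsFiniteMeasure μ] [IsProbabilityMeasure ν]

lemma crossProb_le_crossProbEnh (b h : ℝ) :
    crossProb adj emb μ b h ≤ crossProbEnh adj φ emb μ ν b h := by
  refine ENNReal.toReal_mono (measure_ne_top _ _) ?_
  calc μ {η | VertCrossing adj emb (toConfig η) b h}
      = (μ.prod ν) ({η | VertCrossing adj emb (toConfig η) b h} ×ˢ univ) := by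
        rw [Measure.prod_prod, measure_univ, mul_one]
    _ ≤ _ := measure_mono fun p hp => hp.1.mono subset_union_left

lemma crossProbEnh_le_crossProb {b h b' h' : ℝ}
    (himp : ∀ ω α, VertCrossing adj emb (enhanced φ ω α) b h → VertCrossing adj emb ω b' h') :
    crossProbEnh adj φ emb μ ν b h ≤ crossProb adj emb μ b' h' := by
  refine ENNReal.toReal_mono (measure_ne_top _ _) ?_
  calc (μ.prod ν) {ηα | VertCrossing adj emb (enhanced φ (toConfig ηα.1) ηα.2) b h}
      ≤ (μ.prod ν) ({η | VertCrossing adj emb (toConfig η) b' h'} ×ˢ univ) :=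
        measure_mono fun p hp => ⟨himp _ _ hp, trivial⟩
    _ = _ := by rw [Measure.prod_prod, measure_univ, mul_one]

end CrossProb

/-- Uses the junk value `sSup ∅ = 0` of `ℝ`. -/
lemma pcOf_mem_Icc (adj : Site → Site → Prop) (P : ℝ → Measure (Site → Bool)) :
    pcOf adj P ∈ Icc (0 : ℝ) 1 :=
  ⟨Real.sSup_nonneg fun _ hp => hp.1.1, Real.sSup_le (fun _ hp => hp.1.2) zero_le_one⟩

lemma tendsto_of_lower_of_upper_family {α ι : Type*} {l : Filter α} {l' : Filter ι} [l'.NeBot]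
    {f g : α → ℝ} {u : ι → α → ℝ} {L : ℝ} {L' : ι → ℝ} (hf : Tendsto f l (𝓝 L))
    (hfg : ∀ᶠ x in l, f x ≤ g x) (hL' : Tendsto L' l' (𝓝 L))
    (hu : ∀ᶠ i in l', Tendsto (u i) l (𝓝 (L' i)) ∧ ∀ᶠ x in l, g x ≤ u i x) :
    Tendsto g l (𝓝 L) := by
  refine tendsto_order.2 ⟨fun a ha => ?_, fun a ha => ?_⟩
  · filter_upwards [hf.eventually (lt_mem_nhds ha), hfg] with x h₁ h₂ using h₁.trans_le h₂
  · obtain ⟨i, hi, hui, hgu⟩ := ((hL'.eventually (gt_mem_nhds ha)).and hu).exists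
    filter_upwards [hui.eventually (gt_mem_nhds hi), hgu] with x h₁ h₂ using h₂.trans_lt h₁

lemma tendsto_comp_div_add_sub {F : ℝ → ℝ} (hF : ContinuousOn F (Ioi 0)) {b h : ℝ} (hb : 0 < b)
    (hh : 0 < h) : Tendsto (fun κ => F ((b + κ) / (h - κ))) (𝓝[>] 0) (𝓝 (F (b / h))) := by
  have hcont : ContinuousAt (fun κ : ℝ => (b + κ) / (h - κ)) 0 :=
    (continuousAt_const.add continuousAt_id).div (continuousAt_const.sub continuousAt_id)
      (by simpa using hh.ne')
  refine ((hF.continuousAt (Ioi_mem_nhds (div_pos hb hh))).tendsto.comp ?_).mono_left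
    nhdsWithin_le_nhds
  simpa using hcont.tendsto

/-- for a monotonic nonessential enhancement of site percolation on
the triangular lattice and `s ∈ [0,1]`, if the crossing probabilities of independent
critical site percolation converge as `δ → 0` to a continuous function `F` of the
aspect ratio (Cardy's formula, by Smirnov's theorem), then the crossing probabilities
of the enhanced process converge to the same limit. -/
theorem crossing_probabilities_unchanged_triangular
    (P : ℝ → Measure (Site → Bool))
    (hP : ∀ p ∈ Icc (0:ℝ) 1, IsBernoulli p (P p))
    (R₀ : ℝ) (φ : Config → Config) (hφ : IsEnhancement R₀ φ)
    (hmono : Monotonic φ) (hness : ¬ Essential adjT φ)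
    (s : ℝ) (hs : s ∈ Icc (0:ℝ) 1)
    (F : ℝ → ℝ) (hF : ContinuousOn F (Ioi 0))
    (hconv : ∀ b h : ℝ, 0 < b → 0 < h →
      Tendsto (fun δ => crossProb adjT (embedT δ) (P (pcOf adjT P)) b h)
        (𝓝[>] 0) (𝓝 (F (b / h)))) :
    ∀ b h : ℝ, 0 < b → 0 < h →
      Tendsto (fun δ => crossProbEnh adjT φ (embedT δ) (P (pcOf adjT P)) (P s) b h)
        (𝓝[>] 0) (𝓝 (F (b / h))) := by
  intro b h hb hh
  have := (hP _ (pcOf_mem_Icc adjT P)).1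
  have := (hP s hs).1
  refine tendsto_of_lower_of_upper_family
    (u := fun κ δ => crossProb adjT (embedT δ) (P (pcOf adjT P)) (b + κ) (h - κ)) (hconv b h hb hh)
    (Eventually.of_forall fun _ => crossProb_le_crossProbEnh b h)
    (tendsto_comp_div_add_sub hF hb hh) ?_
  filter_upwards [Ioo_mem_nhdsGT hh] with κ hκ
  refine ⟨hconv _ _ (by linarith [hκ.1]) (sub_pos.2 hκ.2), ?_⟩
  filter_upwards [eventually_vertCrossing_of_vertCrossing_enhanced hφ hmono hness hκ] with δ hδ
  exact crossProbEnh_le_crossProb hδ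

end PercEnh
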